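/- arXiv:2010.08645 — 3 statements merged into one kernel-verified Lean document; each statement's English description precedes it below -/
import Mathlib

section
/- Let Λ be a τ-tilting finite K-stone algebra and let X = S ⊔ T[1] be a semibrick pair consisting of two bricks. If Ext^1_Λ(S,S) = 0 and dim_K Hom_Λ(T,S) = 1, then every nonzero homomorphism f : T → S is a minimal left Filt(S)-approximation of T, i.e. every homomorphism from T to a module in Filt(S) factors through f and f is left minimal. Moreover: (1) if f is injective, then X is singly left mutation compatible at S and μ_S^+(T[1]) = coker(f); (2) if f is surjective, then X is singly left mutation compatible at S and μ_S^+(T[1]) = (ker f)[1]. -/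
open CategoryTheory

attribute [local instance] HasDerivedCategory.standard

namespace Paper

variable (K Λ : Type) [Field K] [Ring Λ] [Algebra K Λ] [FiniteDimensional K Λ]

/-- A brick: a finite module whose endomorphism ring is a division ring. -/
def IsBrick (S : ModuleCat.{0} Λ) : Prop :=
  Module.Finite Λ S ∧ Nontrivial S ∧ ∀ f : S →ₗ[Λ] S, f ≠ 0 → Function.Bijective f

/-- Hom_Λ(A,B) = 0. -/
def NoHom (A B : ModuleCat.{0} Λ) : Prop := ∀ f : A →ₗ[Λ] B, f = 0

/-- Ext¹_Λ(A,B) = 0 : every short exact sequence 0 → B → E → A → 0 splits. -/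
def Ext1Vanish (A B : ModuleCat.{0} Λ) : Prop :=
  ∀ (E : ModuleCat.{0} Λ) (i : B →ₗ[Λ] E) (p : E →ₗ[Λ] A),
    Function.Injective i → Function.Surjective p → LinearMap.range i = LinearMap.ker p →
    ∃ s : A →ₗ[Λ] E, p.comp s = LinearMap.id

/-- A semibrick: a set of bricks which are pairwise hom-orthogonal. -/
def IsSemibrick (D : Set (ModuleCat.{0} Λ)) : Prop :=
  (∀ S ∈ D, IsBrick Λ S) ∧ ∀ S ∈ D, ∀ T ∈ D, S ≠ T → NoHom Λ S T ∧ NoHom Λ T S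

/-- A semibrick pair `D ⊔ U[1]`. -/
def IsSemibrickPair (D U : Set (ModuleCat.{0} Λ)) : Prop :=
  IsSemibrick Λ D ∧ IsSemibrick Λ U ∧
    ∀ S ∈ D, ∀ T ∈ U, NoHom Λ S T ∧ Ext1Vanish Λ S T

/-- `Y` is a direct summand (retract) of `X`. -/
def IsRetractOf {C : Type*} [Category C] (Y X : C) : Prop :=
  ∃ (s : Y ⟶ X) (r : X ⟶ Y), s ≫ r = 𝟙 Y

/-- `D ⊔ U[1]` is a 2-term simple minded collection: it is a semibrick pair and the
smallest triangulated subcategory of `D^b(mod Λ)` (realized as the objects of the derived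
category of `Mod Λ` with bounded, finitely generated homology) containing
`{S : S ∈ D} ∪ {T[1] : T ∈ U}` and closed under direct summands is all of `D^b(mod Λ)`. -/
def IsTwoTermSMC (D U : Set (ModuleCat.{0} Λ)) : Prop :=
  IsSemibrickPair Λ D U ∧
  ∀ (S : ObjectProperty (DerivedCategory (ModuleCat.{0} Λ))) [S.IsTriangulated],
    (∀ X Y, S X → IsRetractOf Y X → S Y) →
    (∀ M ∈ D, S ((DerivedCategory.singleFunctor (ModuleCat.{0} Λ) 0).obj M)) →
    (∀ M ∈ U, S (((DerivedCategory.singleFunctor (ModuleCat.{0} Λ) 0).obj M)⟦(1:ℤ)⟧)) →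
    ∀ Z : DerivedCategory (ModuleCat.{0} Λ),
      (∃ a b : ℤ, ∀ n : ℤ, (n < a ∨ b < n) →
        Subsingleton ((DerivedCategory.homologyFunctor (ModuleCat.{0} Λ) n).obj Z)) →
      (∀ n : ℤ, Module.Finite Λ ((DerivedCategory.homologyFunctor (ModuleCat.{0} Λ) n).obj Z)) →
      S Z

/-- `D ⊆ D'` up to isomorphism. -/
def SubsetUpToIso (D D' : Set (ModuleCat.{0} Λ)) : Prop :=
  ∀ S ∈ D, ∃ S' ∈ D', Nonempty (S ≅ S')

/-- The semibrick pair `D ⊔ U[1]` is completable. -/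
def Completable (D U : Set (ModuleCat.{0} Λ)) : Prop :=
  ∃ D' U', IsTwoTermSMC Λ D' U' ∧ SubsetUpToIso Λ D D' ∧ SubsetUpToIso Λ U U'

/-- The semibrick pair `D ⊔ U[1]` is pairwise completable. -/
def PairwiseCompletable (D U : Set (ModuleCat.{0} Λ)) : Prop :=
  ∀ S ∈ D, ∀ T ∈ U, ∃ D' U', IsTwoTermSMC Λ D' U' ∧
    (∃ S' ∈ D', Nonempty (S ≅ S')) ∧ (∃ T' ∈ U', Nonempty (T ≅ T'))

/-- `Λ` has the pairwise 2-simple minded completability property. -/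
def PairwiseCompletabilityProperty : Prop :=
  ∀ D U : Set (ModuleCat.{0} Λ), IsSemibrickPair Λ D U →
    PairwiseCompletable Λ D U → Completable Λ D U

/-- `Λ` is τ-tilting finite: only finitely many bricks up to isomorphism. -/
def TauTiltingFinite : Prop :=
  ∃ (n : ℕ) (f : Fin n → ModuleCat.{0} Λ),
    ∀ M : ModuleCat.{0} Λ, IsBrick Λ M → ∃ i, Nonempty (M ≅ f i)

/-- `rk Λ = n` : there are exactly `n` isomorphism classes of simple `Λ`-modules. -/
def AlgebraRank (n : ℕ) : Prop :=
  ∃ f : Fin n → ModuleCat.{0} Λ,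
    (∀ i, IsSimpleModule Λ (f i)) ∧
    (∀ i j, i ≠ j → ¬ Nonempty (f i ≅ f j)) ∧
    (∀ M : ModuleCat.{0} Λ, IsSimpleModule Λ M → ∃ i, Nonempty (M ≅ f i))

/-- `X` belongs to `Filt(C)` : it has a finite filtration whose subquotients are
isomorphic to members of `C`. -/
def FiltClass (C : Set (ModuleCat.{0} Λ)) (X : ModuleCat.{0} Λ) : Prop :=
  ∃ (n : ℕ) (c : Fin (n + 1) → Submodule Λ X),
    c 0 = ⊥ ∧ c (Fin.last n) = ⊤ ∧ (∀ i : Fin n, c i.castSucc ≤ c i.succ) ∧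
    ∀ i : Fin n, ∃ Z ∈ C,
      Nonempty ((↥(c i.succ) ⧸ (Submodule.comap (c i.succ).subtype (c i.castSucc))) ≃ₗ[Λ] Z)

/-- `X ∈ Filt(S)` for a single module `S`. -/
def IsFiltBy (S X : ModuleCat.{0} Λ) : Prop := FiltClass Λ {S} X

/-- `f : T → A` is a minimal left `Filt(S)`-approximation. -/
def IsMinimalLeftFiltApprox (S T A : ModuleCat.{0} Λ) (f : T →ₗ[Λ] A) : Prop :=
  IsFiltBy Λ S A ∧
  (∀ N : ModuleCat.{0} Λ, IsFiltBy Λ S N → ∀ j : T →ₗ[Λ] N,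
      ∃ h : A →ₗ[Λ] N, h.comp f = j) ∧
  (∀ h : A →ₗ[Λ] A, h.comp f = f → Function.Bijective h)

/-- The semibrick pair `D ⊔ U[1]` is singly left mutation compatible at `S ∈ D`. -/
def SinglyLeftCompatAt (D U : Set (ModuleCat.{0} Λ)) (S : ModuleCat.{0} Λ) : Prop :=
  S ∈ D ∧ ∀ T ∈ U, ∃ (A : ModuleCat.{0} Λ) (g : T →ₗ[Λ] A),
    IsMinimalLeftFiltApprox Λ S T A g ∧ (Function.Injective g ∨ Function.Surjective g)

/-- The short exact sequence `0 → A → E → T → 0` (with `A ∈ Filt S`) corresponds to the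
minimal left `Filt(S)`-approximation `T[-1] → A` in `D^b(mod Λ)` : every extension of `T`
by a module of `Filt(S)` is a pushout of it, and it is left minimal. -/
def IsMinimalExtApprox (S T A E : ModuleCat.{0} Λ) (i : A →ₗ[Λ] E) (p : E →ₗ[Λ] T) : Prop :=
  IsFiltBy Λ S A ∧ Function.Injective i ∧ Function.Surjective p ∧
    LinearMap.range i = LinearMap.ker p ∧
  (∀ (N F : ModuleCat.{0} Λ) (j : N →ₗ[Λ] F) (q : F →ₗ[Λ] T), IsFiltBy Λ S N →
      Function.Injective j → Function.Surjective q → LinearMap.range j = LinearMap.ker q →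
      ∃ (h : A →ₗ[Λ] N) (φ : E →ₗ[Λ] F), j.comp h = φ.comp i ∧ q.comp φ = p) ∧
  (∀ h : A →ₗ[Λ] A,
      (∃ φ : E →ₗ[Λ] E, i.comp h = φ.comp i ∧ p.comp φ = p) → Function.Bijective h)

/-- `D' ⊔ U'[1]` is the left mutation `μ_S^+(D ⊔ U[1])` of the semibrick pair `D ⊔ U[1]`
at `S ∈ D`. -/
def IsLeftMutation (S : ModuleCat.{0} Λ) (D U D' U' : Set (ModuleCat.{0} Λ)) : Prop :=
  SinglyLeftCompatAt Λ D U S ∧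
  (∀ R : ModuleCat.{0} Λ, R ∈ D' ↔
    ((∃ T ∈ D, T ≠ S ∧ ∃ (A : ModuleCat.{0} Λ) (i : A →ₗ[Λ] R) (p : R →ₗ[Λ] T),
        IsMinimalExtApprox Λ S T A R i p) ∨
     (∃ T ∈ U, ∃ (A : ModuleCat.{0} Λ) (g : T →ₗ[Λ] A),
        IsMinimalLeftFiltApprox Λ S T A g ∧ Function.Injective g ∧ ¬ Function.Surjective g ∧
        Nonempty (R ≅ ModuleCat.of Λ (A ⧸ LinearMap.range g))))) ∧
  (∀ R : ModuleCat.{0} Λ, R ∈ U' ↔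
    (Nonempty (R ≅ S) ∨
     ∃ T ∈ U, ∃ (A : ModuleCat.{0} Λ) (g : T →ₗ[Λ] A),
        IsMinimalLeftFiltApprox Λ S T A g ∧ Function.Surjective g ∧ ¬ Function.Injective g ∧
        Nonempty (R ≅ ModuleCat.of Λ (LinearMap.ker g))))

/-- One left mutation step between semibrick pairs. -/
def MutStep (X Y : Set (ModuleCat.{0} Λ) × Set (ModuleCat.{0} Λ)) : Prop :=
  ∃ S : ModuleCat.{0} Λ, IsLeftMutation Λ S X.1 X.2 Y.1 Y.2

/-- The semibrick pair `D ⊔ U[1]` is mutation compatible. -/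
def MutationCompatible (D U : Set (ModuleCat.{0} Λ)) : Prop :=
  U = ∅ ∨ ∃ U' : Set (ModuleCat.{0} Λ),
    Relation.ReflTransGen (MutStep Λ) (D, U) (∅, U')

/-- `S` is a `K`-stone: a brick with `End(S) ≅ K` and no self-extensions. -/
def IsKStone (S : ModuleCat.{0} Λ) : Prop :=
  IsBrick Λ S ∧ (∀ f : S →ₗ[Λ] S, ∃ c : K, ∀ x : S, f x = (algebraMap K Λ c) • x) ∧
    Ext1Vanish Λ S S

/-- `Λ` is a `K`-stone algebra. -/
def KStoneAlgebra : Prop := ∀ S : ModuleCat.{0} Λ, IsBrick Λ S → IsKStone K Λ S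

/-- `dim_K Hom_Λ(T,A) = 1`. -/
def HomDimOne (T A : ModuleCat.{0} Λ) : Prop :=
  ∃ f : T →ₗ[Λ] A, f ≠ 0 ∧
    ∀ g : T →ₗ[Λ] A, ∃ c : K, ∀ x : T, g x = (algebraMap K Λ c) • f x

/-- A wide subcategory of `mod Λ` : a class of finite modules closed under isomorphism,
kernels, cokernels and extensions. -/
def IsWide (W : Set (ModuleCat.{0} Λ)) : Prop :=
  (∀ M ∈ W, Module.Finite Λ M) ∧
  (∀ M ∈ W, ∀ N : ModuleCat.{0} Λ, Nonempty (M ≅ N) → N ∈ W) ∧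
  (∀ M ∈ W, ∀ N ∈ W, ∀ f : M →ₗ[Λ] N, ModuleCat.of Λ (LinearMap.ker f) ∈ W) ∧
  (∀ M ∈ W, ∀ N ∈ W, ∀ f : M →ₗ[Λ] N, ModuleCat.of Λ (N ⧸ LinearMap.range f) ∈ W) ∧
  (∀ (A E B : ModuleCat.{0} Λ), A ∈ W → B ∈ W → Module.Finite Λ E →
    ∀ (i : A →ₗ[Λ] E) (p : E →ₗ[Λ] B), Function.Injective i → Function.Surjective p →
      LinearMap.range i = LinearMap.ker p → E ∈ W)

/-- A simple object of the wide subcategory `W`. -/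
def IsWSimple (W : Set (ModuleCat.{0} Λ)) (M : ModuleCat.{0} Λ) : Prop :=
  M ∈ W ∧ Nontrivial M ∧
    ∀ N : Submodule Λ M, ModuleCat.of Λ N ∈ W → N = ⊥ ∨ N = ⊤

/-- The wide subcategory `W` has rank `n`: it has exactly `n` isomorphism classes of
simple objects. -/
def WideRank (W : Set (ModuleCat.{0} Λ)) (n : ℕ) : Prop :=
  ∃ f : Fin n → ModuleCat.{0} Λ,
    (∀ i, IsWSimple Λ W (f i)) ∧
    (∀ i j, i ≠ j → ¬ Nonempty (f i ≅ f j)) ∧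
    (∀ M : ModuleCat.{0} Λ, IsWSimple Λ W M → ∃ i, Nonempty (M ≅ f i))

/-- The smallest wide subcategory containing a class `C` of modules. -/
def smallestWide (C : Set (ModuleCat.{0} Λ)) : Set (ModuleCat.{0} Λ) :=
  {M | ∀ W : Set (ModuleCat.{0} Λ), IsWide Λ W → C ⊆ W → M ∈ W}

/-- `X ∈ Fac(C)` : `X` is a quotient of a finite direct sum of members of `C`. -/
def FacClass (C : Set (ModuleCat.{0} Λ)) (X : ModuleCat.{0} Λ) : Prop :=
  ∃ (n : ℕ) (f : Fin n → ModuleCat.{0} Λ), (∀ i, f i ∈ C) ∧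
    ∃ p : ((i : Fin n) → f i) →ₗ[Λ] X, Function.Surjective p

/-- `X ∈ Sub(C)` : `X` is a submodule of a finite direct sum of members of `C`. -/
def SubClass (C : Set (ModuleCat.{0} Λ)) (X : ModuleCat.{0} Λ) : Prop :=
  ∃ (n : ℕ) (f : Fin n → ModuleCat.{0} Λ), (∀ i, f i ∈ C) ∧
    ∃ j : X →ₗ[Λ] ((i : Fin n) → f i), Function.Injective j

/-- An indecomposable module. -/
def Indec (M : ModuleCat.{0} Λ) : Prop :=
  Nontrivial M ∧ ∀ N₁ N₂ : Submodule Λ M, IsCompl N₁ N₂ → N₁ = ⊥ ∨ N₂ = ⊥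

/-!
Since `Ext¹(S,S) = 0` and the vanishing of `Ext¹(S,-)` is closed under extensions, every
filtration of a module `N ∈ Filt(S)` splits layer by layer. A map `T → N` then factors
through `f` one layer at a time, since `dim_K Hom(T,S) = 1` makes every map `T → S` a scalar
multiple of `f`. Left minimality of `f` comes from `S` being a brick: an endomorphism `h`
with `h ∘ f = f` is nonzero. Minimal approximations are unique up to isomorphism under `T`,
which identifies the cokernels and the kernels.
-/

section

variable {K Λ}

theorem Ext1Vanish.exists_section {S B : ModuleCat.{0} Λ} (hB : Ext1Vanish Λ S B)
    {E : Type} [AddCommGroup E] [Module Λ E] (p : E →ₗ[Λ] S) (hp : Function.Surjective p)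
    (e : B ≃ₗ[Λ] LinearMap.ker p) : ∃ s : S →ₗ[Λ] E, p ∘ₗ s = LinearMap.id :=
  hB (ModuleCat.of Λ E) ((LinearMap.ker p).subtype ∘ₗ e.toLinearMap) p
    ((LinearMap.ker p).injective_subtype.comp e.injective) hp
    (by rw [LinearMap.range_comp, LinearEquiv.range, Submodule.map_top,
      Submodule.range_subtype])

theorem Ext1Vanish.of_linearEquiv {S B B' : ModuleCat.{0} Λ} (hB : Ext1Vanish Λ S B)
    (e : B ≃ₗ[Λ] B') : Ext1Vanish Λ S B' := fun _ i p hi hp hr =>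
  hB.exists_section p hp (e.trans
    ((LinearEquiv.ofInjective i hi).trans (LinearEquiv.ofEq _ _ hr)))

theorem Ext1Vanish.of_subsingleton {S B : ModuleCat.{0} Λ} [Subsingleton B] :
    Ext1Vanish Λ S B := by
  intro E i p _ hp hr
  have hker : LinearMap.ker p = ⊥ := by
    rw [← hr, LinearMap.range_eq_bot]
    exact Subsingleton.elim _ _
  let e := LinearEquiv.ofBijective p ⟨LinearMap.ker_eq_bot.mp hker, hp⟩
  exact ⟨e.symm.toLinearMap, LinearMap.ext e.apply_symm_apply⟩

theorem Ext1Vanish.of_extension {S N : ModuleCat.{0} Λ} (P : Submodule Λ N)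
    (hP : Ext1Vanish Λ S (ModuleCat.of Λ P)) (hQ : Ext1Vanish Λ S (ModuleCat.of Λ (N ⧸ P))) :
    Ext1Vanish Λ S N := by
  intro E i p hi hp hr
  set J := P.map i
  have hJ : J ≤ LinearMap.ker p := hr ▸ LinearMap.map_le_range
  set p' : (E ⧸ J) →ₗ[Λ] S := J.liftQ p hJ
  have hp' : ∀ x, p' (J.mkQ x) = p x := fun _ => rfl
  -- `0 → N/P → E/J → S → 0` splits, by `Ext¹(S, N/P) = 0`, where `J` is the image of `P`
  obtain ⟨s', hs'⟩ := hQ (ModuleCat.of Λ (E ⧸ J)) (P.mapQ J i (Submodule.le_comap_map i P)) p'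
    (LinearMap.ker_eq_bot.mp (by
      rw [Submodule.ker_mapQ, Submodule.comap_map_eq_of_injective hi, Submodule.mkQ_map_self]))
    (fun y => let ⟨x, hx⟩ := hp y; ⟨J.mkQ x, hx⟩)
    (by rw [Submodule.range_mapQ, Submodule.ker_liftQ, hr])
  have hs'_apply : ∀ y, p' (s' y) = y := LinearMap.congr_fun hs'
  -- the preimage `E₂` of the splitting is an extension of `S` by `J ≅ P`
  set E₂ := (LinearMap.range s').comap J.mkQ
  have hJE₂ : J ≤ E₂ := fun x hx =>
    ⟨0, by rw [map_zero, Submodule.mkQ_apply, eq_comm, Submodule.Quotient.mk_eq_zero]; exact hx⟩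
  have hker : LinearMap.ker (p ∘ₗ E₂.subtype) = J.comap E₂.subtype := by
    ext ⟨x, y, hy⟩
    simp only [LinearMap.mem_ker, LinearMap.comp_apply, Submodule.subtype_apply,
      Submodule.mem_comap]
    refine ⟨fun hx => ?_, fun hx => hJ hx⟩
    rw [← hp', ← hy, hs'_apply] at hx
    rw [← Submodule.Quotient.mk_eq_zero, ← Submodule.mkQ_apply, ← hy, hx, map_zero]
  obtain ⟨t, ht⟩ := hP.exists_section (p ∘ₗ E₂.subtype)
    (fun y => by
      obtain ⟨x, hx⟩ := J.mkQ_surjective (s' y)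
      exact ⟨⟨x, y, hx.symm⟩, by rw [LinearMap.comp_apply, Submodule.subtype_apply, ← hp', hx,
        hs'_apply]⟩)
    ((Submodule.equivMapOfInjective i hi P).trans
      ((Submodule.comapSubtypeEquivOfLe hJE₂).symm.trans (LinearEquiv.ofEq _ _ hker.symm)))
  exact ⟨E₂.subtype ∘ₗ t, ht⟩


theorem IsFiltBy.induction_on {S N : ModuleCat.{0} Λ} (hN : IsFiltBy Λ S N)
    (Q : ModuleCat.{0} Λ → Prop) (subsingleton : ∀ M : ModuleCat.{0} Λ, Subsingleton M → Q M)
    (of_linearEquiv : ∀ M M' : ModuleCat.{0} Λ, (M ≃ₗ[Λ] M') → Q M → Q M')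
    (extension : ∀ (M : ModuleCat.{0} Λ) (P : Submodule Λ M),
      Q (ModuleCat.of Λ P) → ((M ⧸ P) ≃ₗ[Λ] S) → Q M) :
    Q N := by
  obtain ⟨n, c, hc0, hctop, hmono, hquot⟩ := hN
  have hstage : ∀ i, Q (ModuleCat.of Λ (c i)) := by
    intro i
    induction i using Fin.induction with
    | zero => exact subsingleton _ (by rw [hc0]; infer_instance)
    | succ i ih =>
      obtain ⟨Z, rfl, ⟨e⟩⟩ := hquot i
      exact extension _ _
        (of_linearEquiv _ _ (Submodule.comapSubtypeEquivOfLe (hmono i)).symm ih) e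
  exact of_linearEquiv _ _ ((LinearEquiv.ofEq _ _ hctop).trans Submodule.topEquiv)
    (hstage (Fin.last n))

theorem exists_comp_eq_of_extension {S T M : ModuleCat.{0} Λ} {f : T →ₗ[Λ] S}
    (hfac : ∀ g : T →ₗ[Λ] S, ∃ u : S →ₗ[Λ] S, u ∘ₗ f = g) (P : Submodule Λ M)
    (hP_ext : Ext1Vanish Λ S (ModuleCat.of Λ P))
    (hP : ∀ j : T →ₗ[Λ] P, ∃ h : S →ₗ[Λ] P, h ∘ₗ f = j) (e : (M ⧸ P) ≃ₗ[Λ] S)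
    (j : T →ₗ[Λ] M) : ∃ h : S →ₗ[Λ] M, h ∘ₗ f = j := by
  set π : M →ₗ[Λ] S := e.toLinearMap ∘ₗ P.mkQ
  have hπ : LinearMap.ker π = P := by
    rw [LinearMap.ker_comp, LinearEquiv.ker, Submodule.comap_bot, Submodule.ker_mkQ]
  obtain ⟨s, hs⟩ := hP_ext M P.subtype π P.injective_subtype
    (e.surjective.comp P.mkQ_surjective) (by rw [Submodule.range_subtype, hπ])
  obtain ⟨u, hu⟩ := hfac (π ∘ₗ j)
  have hmem : ∀ x, (j - s ∘ₗ π ∘ₗ j) x ∈ P := fun x => by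
    rw [← hπ, LinearMap.mem_ker, LinearMap.sub_apply, map_sub]
    exact sub_eq_zero.mpr (LinearMap.congr_fun hs (π (j x))).symm
  obtain ⟨h₀, hh₀⟩ := hP ((j - s ∘ₗ π ∘ₗ j).codRestrict P hmem)
  refine ⟨P.subtype ∘ₗ h₀ + s ∘ₗ u, LinearMap.ext fun x => ?_⟩
  have h₀x : (h₀ (f x) : M) = j x - s (π (j x)) :=
    congrArg Subtype.val (LinearMap.congr_fun hh₀ x)
  simp only [LinearMap.add_apply, LinearMap.comp_apply, Submodule.subtype_apply, h₀x,
    ← LinearMap.comp_apply u f, hu, sub_add_cancel]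

theorem IsFiltBy.exists_comp_eq {S T N : ModuleCat.{0} Λ} (hSS : Ext1Vanish Λ S S)
    {f : T →ₗ[Λ] S} (hfac : ∀ g : T →ₗ[Λ] S, ∃ u : S →ₗ[Λ] S, u ∘ₗ f = g)
    (hN : IsFiltBy Λ S N) (j : T →ₗ[Λ] N) : ∃ h : S →ₗ[Λ] N, h ∘ₗ f = j := by
  refine (hN.induction_on
    (fun M => Ext1Vanish Λ S M ∧ ∀ j : T →ₗ[Λ] M, ∃ h : S →ₗ[Λ] M, h ∘ₗ f = j)
    (fun M _ => ⟨Ext1Vanish.of_subsingleton, fun j => ⟨0, ?_⟩⟩)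
    (fun M M' e ⟨hM, hM_fac⟩ => ⟨hM.of_linearEquiv e, fun j => ?_⟩)
    (fun M P ⟨hP, hP_fac⟩ e => ⟨hP.of_extension P (hSS.of_linearEquiv e.symm),
      exists_comp_eq_of_extension hfac P hP hP_fac e⟩)).2 j
  · exact Subsingleton.elim _ _
  · obtain ⟨h, hh⟩ := hM_fac (e.symm.toLinearMap ∘ₗ j)
    refine ⟨e.toLinearMap ∘ₗ h, ?_⟩
    rw [LinearMap.comp_assoc, hh, ← LinearMap.comp_assoc, LinearEquiv.comp_symm,
      LinearMap.id_comp]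


omit [FiniteDimensional K Λ] in
theorem HomDimOne.exists_comp_eq {T S : ModuleCat.{0} Λ} (hdim : HomDimOne K Λ T S)
    {f : T →ₗ[Λ] S} (hf : f ≠ 0) (g : T →ₗ[Λ] S) : ∃ u : S →ₗ[Λ] S, u ∘ₗ f = g := by
  obtain ⟨f₀, -, hall⟩ := hdim
  obtain ⟨c, hc⟩ := hall f
  obtain ⟨d, hd⟩ := hall g
  have hc0 : c ≠ 0 := fun h0 => hf (LinearMap.ext fun x => by simp [hc x, h0])
  -- `algebraMap K Λ` lands in the centre of `Λ`, so scalar multiplication by it is `Λ`-linear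
  let u : S →ₗ[Λ] S :=
    { toFun := fun y => algebraMap K Λ (d * c⁻¹) • y
      map_add' := smul_add _
      map_smul' := fun r y => by
        simp only [RingHom.id_apply, smul_smul, Algebra.commutes] }
  refine ⟨u, LinearMap.ext fun x => ?_⟩
  change algebraMap K Λ (d * c⁻¹) • f x = g x
  rw [hc x, hd x, smul_smul, ← map_mul, mul_assoc, inv_mul_cancel₀ hc0, mul_one]

theorem isFiltBy_self (S : ModuleCat.{0} Λ) : IsFiltBy Λ S S := by
  refine ⟨1, ![⊥, ⊤], rfl, rfl, fun i => ?_, fun i => ⟨S, rfl, ⟨?_⟩⟩⟩ <;>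
    obtain rfl := Subsingleton.elim i 0
  · exact bot_le
  exact (Submodule.quotEquivOfEqBot _ (by
    change Submodule.comap (⊤ : Submodule Λ S).subtype ⊥ = ⊥
    rw [Submodule.comap_bot, Submodule.ker_subtype])).trans
    Submodule.topEquiv

theorem isMinimalLeftFiltApprox_of_isBrick {S T : ModuleCat.{0} Λ} (hS : IsBrick Λ S)
    (hSS : Ext1Vanish Λ S S) {f : T →ₗ[Λ] S} (hf : f ≠ 0)
    (hfac : ∀ g : T →ₗ[Λ] S, ∃ u : S →ₗ[Λ] S, u ∘ₗ f = g) :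
    IsMinimalLeftFiltApprox Λ S T S f :=
  ⟨isFiltBy_self S, fun _ hN => hN.exists_comp_eq hSS hfac, fun h hh =>
    hS.2.2 h fun h0 => hf (by rw [← hh, h0, LinearMap.zero_comp])⟩

theorem IsMinimalLeftFiltApprox.exists_linearEquiv {S T A B : ModuleCat.{0} Λ}
    {f : T →ₗ[Λ] A} {g : T →ₗ[Λ] B} (hf : IsMinimalLeftFiltApprox Λ S T A f)
    (hg : IsMinimalLeftFiltApprox Λ S T B g) :
    ∃ e : A ≃ₗ[Λ] B, e.toLinearMap ∘ₗ f = g := by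
  obtain ⟨u, hu⟩ := hf.2.1 B hg.1 g
  obtain ⟨v, hv⟩ := hg.2.1 A hf.1 f
  have hvu := hf.2.2 (v ∘ₗ u) (by rw [LinearMap.comp_assoc, hu, hv])
  have huv := hg.2.2 (u ∘ₗ v) (by rw [LinearMap.comp_assoc, hv, hu])
  have hu_inj : Function.Injective u :=
    .of_comp (f := v) (by rw [← LinearMap.coe_comp]; exact hvu.1)
  have hu_surj : Function.Surjective u :=
    .of_comp (g := v) (by rw [← LinearMap.coe_comp]; exact huv.2)
  exact ⟨LinearEquiv.ofBijective u ⟨hu_inj, hu_surj⟩, hu⟩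

end

theorem nonzero_hom_is_minimal_approx
    (S T : ModuleCat.{0} Λ) (h : IsSemibrickPair Λ {S} {T})
    (hext : Ext1Vanish Λ S S) (hdim : HomDimOne K Λ T S)
    (f : T →ₗ[Λ] S) (hf : f ≠ 0) :
    IsMinimalLeftFiltApprox Λ S T S f ∧
    (Function.Injective f →
      (SinglyLeftCompatAt Λ {S} {T} S ∧
        ∀ (A : ModuleCat.{0} Λ) (g : T →ₗ[Λ] A), IsMinimalLeftFiltApprox Λ S T A g →
          Function.Injective g →
          Nonempty ((A ⧸ LinearMap.range g) ≃ₗ[Λ] (S ⧸ LinearMap.range f)))) ∧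
    (Function.Surjective f →
      (SinglyLeftCompatAt Λ {S} {T} S ∧
        ∀ (A : ModuleCat.{0} Λ) (g : T →ₗ[Λ] A), IsMinimalLeftFiltApprox Λ S T A g →
          Function.Surjective g →
          Nonempty ((LinearMap.ker g) ≃ₗ[Λ] (LinearMap.ker f)))) := by
  have hmin : IsMinimalLeftFiltApprox Λ S T S f :=
    isMinimalLeftFiltApprox_of_isBrick (h.1.1 S rfl) hext hf (hdim.exists_comp_eq hf)
  have hcompat (hf' : Function.Injective f ∨ Function.Surjective f) :
      SinglyLeftCompatAt Λ {S} {T} S :=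
    ⟨rfl, fun _ hT => by rw [Set.mem_singleton_iff.mp hT]; exact ⟨S, f, hmin, hf'⟩⟩
  refine ⟨hmin, fun hinj => ⟨hcompat (.inl hinj), fun A g hg _ => ?_⟩,
    fun hsurj => ⟨hcompat (.inr hsurj), fun A g hg _ => ?_⟩⟩
  · obtain ⟨e, rfl⟩ := hmin.exists_linearEquiv hg
    exact ⟨Submodule.Quotient.equiv _ _ e.symm
      ((Submodule.map_symm_eq_iff e).mpr (LinearMap.range_comp f e.toLinearMap).symm)⟩
  · obtain ⟨e, rfl⟩ := hmin.exists_linearEquiv hg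
    exact ⟨LinearEquiv.ofEq _ _ (LinearEquiv.ker_comp e f)⟩

end Paper
end

section
/- Let Λ be a K-stone finite-dimensional K-algebra, let S and T be bricks in mod Λ such that S ⊔ T[1] is a semibrick pair, and let f : T ↠ S be an epimorphism. Then ker(f) is a brick, dim_K Hom_Λ(ker f, T) = 1, and Hom_Λ(ker f, S) = 0 = Hom_Λ(S, ker f). -/
open CategoryTheory

attribute [local instance] HasDerivedCategory.standard

namespace Paper

variable (K Λ : Type) [Field K] [Ring Λ] [Algebra K Λ] [FiniteDimensional K Λ]

/-! Put `N = ker f` and `ι : N → T`, so that `0 → N → T → S → 0` is exact. As `Ext¹(S,T) = 0`,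
every map `N → T` extends to an endomorphism of `T`, a scalar since `T` is a `K`-stone; so
`Hom(N,T) = K·ι`, hence `End(N) = K` and `N` is a brick (`N ≠ 0`, for otherwise `f` would be an
isomorphism although `Hom(S,T) = 0`). Now `N` is a `K`-stone, and `Ext¹(N,N) = 0` lifts every map
`N → S` through `f` to a multiple of `ι`, which `f` kills: `Hom(N,S) = 0`. Finally `Hom(S,N)`
embeds in `Hom(S,T) = 0`. -/

section

variable {Λ}

theorem Ext1Vanish.exists_retraction {B C E : ModuleCat.{0} Λ} (hext : Ext1Vanish Λ B C)
    (i : C →ₗ[Λ] E) (p : E →ₗ[Λ] B) (hi : Function.Injective i) (hp : Function.Surjective p)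
    (hexact : LinearMap.range i = LinearMap.ker p) :
    ∃ r : E →ₗ[Λ] C, r ∘ₗ i = LinearMap.id := by
  obtain ⟨s, hs⟩ := hext E i p hi hp hexact
  have hex : Function.Exact i p := LinearMap.exact_iff.mpr hexact.symm
  exact (((Function.Exact.split_tfae' hex).out 0 1 rfl rfl).mp ⟨hi, s, hs⟩).2

theorem Ext1Vanish.exists_extend {T B C : ModuleCat.{0} Λ} (hext : Ext1Vanish Λ B C)
    (p : T →ₗ[Λ] B) (hp : Function.Surjective p) (j : LinearMap.ker p →ₗ[Λ] C) :
    ∃ h : T →ₗ[Λ] C, h ∘ₗ (LinearMap.ker p).subtype = j := by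
  -- `0 → C → E → B → 0` is the pushout of `0 → ker p → T → B → 0` along `j`.
  let M : Submodule Λ (C × T) := LinearMap.range (j.prod (-(LinearMap.ker p).subtype))
  let E : ModuleCat.{0} Λ := ModuleCat.of Λ ((C × T) ⧸ M)
  let β : C →ₗ[Λ] E := M.mkQ ∘ₗ LinearMap.inl Λ C T
  let α : T →ₗ[Λ] E := M.mkQ ∘ₗ LinearMap.inr Λ C T
  let q : E →ₗ[Λ] B := M.liftQ (p ∘ₗ LinearMap.snd Λ C T) (by
    rintro _ ⟨a, rfl⟩
    simp)
  have hqα : ∀ t, q (α t) = p t := fun _ => rfl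
  have hαβ : ∀ a : LinearMap.ker p, α a = β (j a) := by
    intro a
    refine (Submodule.Quotient.eq M).mpr ⟨-a, ?_⟩
    simp
  have hβ : Function.Injective β := by
    refine (injective_iff_map_eq_zero β).mpr fun c hc => ?_
    obtain ⟨a, ha⟩ := (Submodule.Quotient.mk_eq_zero M).mp hc
    have ha0 : a = 0 := Subtype.ext (neg_eq_zero.mp (congrArg Prod.snd ha))
    calc c = j a := (congrArg Prod.fst ha).symm
      _ = 0 := by rw [ha0, map_zero]
  have hq : Function.Surjective q := fun b => let ⟨t, ht⟩ := hp b; ⟨α t, (hqα t).trans ht⟩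
  have hexact : LinearMap.range β = LinearMap.ker q := by
    refine le_antisymm (by rintro _ ⟨c, rfl⟩; exact map_zero p) fun x hx => ?_
    obtain ⟨⟨c, t⟩, rfl⟩ := M.mkQ_surjective x
    have ht : t ∈ LinearMap.ker p := hx
    refine ⟨c + j ⟨t, ht⟩, ?_⟩
    rw [map_add, ← hαβ]
    show M.mkQ (c, 0) + M.mkQ (0, t) = M.mkQ (c, t)
    rw [← map_add, Prod.mk_add_mk, add_zero, zero_add]
  obtain ⟨r, hr⟩ := hext.exists_retraction β q hβ hq hexact
  refine ⟨r ∘ₗ α, LinearMap.ext fun a => ?_⟩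
  simpa [hαβ] using LinearMap.congr_fun hr (j a)

theorem Ext1Vanish.exists_lift {T B C : ModuleCat.{0} Λ} (p : T →ₗ[Λ] B)
    (hp : Function.Surjective p) (hext : Ext1Vanish Λ C (ModuleCat.of Λ (LinearMap.ker p)))
    (g : C →ₗ[Λ] B) :
    ∃ h : C →ₗ[Λ] T, p ∘ₗ h = g := by
  -- `0 → ker p → E → C → 0` is the pullback of `0 → ker p → T → B → 0` along `g`.
  let P : Submodule Λ (T × C) :=
    LinearMap.eqLocus (p ∘ₗ LinearMap.fst Λ T C) (g ∘ₗ LinearMap.snd Λ T C)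
  let E : ModuleCat.{0} Λ := ModuleCat.of Λ P
  let i : LinearMap.ker p →ₗ[Λ] E :=
    LinearMap.codRestrict P ((LinearMap.ker p).subtype.prod 0) fun a => by simp [P]
  let q : E →ₗ[Λ] C := LinearMap.snd Λ T C ∘ₗ P.subtype
  have hi : Function.Injective i := fun a b hab =>
    Subtype.ext (congrArg (fun x : E => (x : T × C).1) hab)
  have hq : Function.Surjective q := fun c =>
    let ⟨t, ht⟩ := hp (g c); ⟨⟨(t, c), ht⟩, rfl⟩
  have hexact : LinearMap.range i = LinearMap.ker q := by
    refine le_antisymm (by rintro _ ⟨a, rfl⟩; rfl) ?_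
    rintro ⟨⟨t, c⟩, htc⟩ (hc : c = 0)
    subst hc
    have ht : t ∈ LinearMap.ker p := by simpa [P] using htc
    exact ⟨⟨t, ht⟩, rfl⟩
  obtain ⟨s, hs⟩ := hext E i q hi hq hexact
  refine ⟨LinearMap.fst Λ T C ∘ₗ P.subtype ∘ₗ s, LinearMap.ext fun c => ?_⟩
  have hsc : (s c : T × C).2 = c := LinearMap.congr_fun hs c
  calc p (s c : T × C).1 = g (s c : T × C).2 := (s c).2
    _ = g c := congrArg g hsc

theorem NoHom.of_injective {A B C : ModuleCat.{0} Λ} (h : NoHom Λ A C) (ι : B →ₗ[Λ] C)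
    (hι : Function.Injective ι) : NoHom Λ A B := fun g =>
  LinearMap.ext fun x => hι (by simpa using LinearMap.congr_fun (h (ι ∘ₗ g)) x)

theorem nontrivial_ker_of_noHom {S T : ModuleCat.{0} Λ} [Nontrivial S] (hST : NoHom Λ S T)
    (f : T →ₗ[Λ] S) (hf : Function.Surjective f) : Nontrivial (LinearMap.ker f) := by
  refine (subsingleton_or_nontrivial _).resolve_left fun _ => ?_
  have hinj : Function.Injective f := LinearMap.ker_eq_bot.mp Submodule.eq_bot_of_subsingleton
  let e := LinearEquiv.ofBijective f ⟨hinj, hf⟩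
  obtain ⟨x, hx⟩ := exists_ne (0 : S)
  exact hx (e.symm.injective (by simpa using LinearMap.congr_fun (hST e.symm.toLinearMap) x))

end

section

variable {K Λ}

omit [FiniteDimensional K Λ]

theorem bijective_of_eq_algebraMap_smul {M : Type*} [AddCommGroup M] [Module Λ M]
    {e : M →ₗ[Λ] M} (he : e ≠ 0) {c : K} (hc : ∀ x, e x = algebraMap K Λ c • x) :
    Function.Bijective e := by
  have hc0 : c ≠ 0 := by
    rintro rfl
    exact he (LinearMap.ext fun x => by simp [hc])
  have : ⇑e = fun x => algebraMap K Λ c • x := funext hc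
  rw [this]
  exact ((Ne.isUnit hc0).map (algebraMap K Λ)).smul_bijective

theorem isBrick_of_forall_eq_algebraMap_smul {M : ModuleCat.{0} Λ} [Module.Finite Λ M]
    [Nontrivial M] (h : ∀ e : M →ₗ[Λ] M, ∃ c : K, ∀ x, e x = algebraMap K Λ c • x) :
    IsBrick Λ M :=
  ⟨inferInstance, inferInstance, fun e he =>
    let ⟨_, hc⟩ := h e; bijective_of_eq_algebraMap_smul he hc⟩

theorem Ext1Vanish.exists_eq_algebraMap_smul_of_ker {S T : ModuleCat.{0} Λ}
    (hext : Ext1Vanish Λ S T) (hT : ∀ φ : T →ₗ[Λ] T, ∃ c : K, ∀ x, φ x = algebraMap K Λ c • x)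
    (f : T →ₗ[Λ] S) (hf : Function.Surjective f) (j : LinearMap.ker f →ₗ[Λ] T) :
    ∃ c : K, ∀ x : LinearMap.ker f, j x = algebraMap K Λ c • (x : T) := by
  obtain ⟨φ, hφ⟩ := hext.exists_extend f hf j
  obtain ⟨c, hc⟩ := hT φ
  exact ⟨c, fun x => by rw [← hφ, LinearMap.comp_apply, Submodule.subtype_apply, hc]⟩

theorem noHom_ker_of_ext1Vanish {S T : ModuleCat.{0} Λ} {f : T →ₗ[Λ] S}
    (hf : Function.Surjective f)
    (hext : Ext1Vanish Λ (ModuleCat.of Λ (LinearMap.ker f)) (ModuleCat.of Λ (LinearMap.ker f)))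
    (hscalar : ∀ j : LinearMap.ker f →ₗ[Λ] T,
      ∃ c : K, ∀ x : LinearMap.ker f, j x = algebraMap K Λ c • (x : T)) :
    NoHom Λ (ModuleCat.of Λ (LinearMap.ker f)) S := by
  intro g
  obtain ⟨j, hj⟩ := Ext1Vanish.exists_lift f hf hext g
  obtain ⟨c, hc⟩ := hscalar j
  refine LinearMap.ext fun x => ?_
  rw [← hj, LinearMap.comp_apply, hc, map_smul, x.2, smul_zero, LinearMap.zero_apply]

end

/-- over a `K`-stone algebra, for a semibrick pair `S ⊔ T[1]` and an
epimorphism `f : T ↠ S`, the kernel of `f` is a brick, `dim_K Hom(ker f, T) = 1`,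
and `Hom(ker f, S) = 0 = Hom(S, ker f)`. -/
theorem ker_of_epi (hK : KStoneAlgebra K Λ)
    (S T : ModuleCat.{0} Λ) (h : IsSemibrickPair Λ {S} {T})
    (f : T →ₗ[Λ] S) (hf : Function.Surjective f) :
    IsBrick Λ (ModuleCat.of Λ (LinearMap.ker f)) ∧
    HomDimOne K Λ (ModuleCat.of Λ (LinearMap.ker f)) T ∧
    NoHom Λ (ModuleCat.of Λ (LinearMap.ker f)) S ∧
    NoHom Λ S (ModuleCat.of Λ (LinearMap.ker f)) := by
  obtain ⟨⟨hSbrick, -⟩, ⟨hTbrick, -⟩, hST⟩ := h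
  have hT : IsBrick Λ T := hTbrick T rfl
  have : Nontrivial S := (hSbrick S rfl).2.1
  have : Module.Finite Λ T := hT.1
  have : IsNoetherianRing Λ := isNoetherian_of_tower K inferInstance
  obtain ⟨hSTHom, hSTExt⟩ := hST S rfl T rfl
  have hscalar := hSTExt.exists_eq_algebraMap_smul_of_ker (hK T hT).2.1 f hf
  have : Nontrivial (LinearMap.ker f) := nontrivial_ker_of_noHom hSTHom f hf
  have hN : IsBrick Λ (ModuleCat.of Λ (LinearMap.ker f)) :=
    isBrick_of_forall_eq_algebraMap_smul fun e =>
      (hscalar ((LinearMap.ker f).subtype ∘ₗ e)).imp fun _ hc x => Subtype.ext (hc x)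
  have hι : (LinearMap.ker f).subtype ≠ 0 := fun h0 =>
    let ⟨x, hx⟩ := exists_ne (0 : LinearMap.ker f)
    hx (Subtype.ext (LinearMap.congr_fun h0 x))
  exact ⟨hN, ⟨_, hι, hscalar⟩, noHom_ker_of_ext1Vanish hf (hK _ hN).2.2 hscalar,
    hSTHom.of_injective _ (Submodule.injective_subtype _)⟩

end Paper
end

section
/- Fix n ≥ 1. For a permutation w of {1, …, n+1} with one-line notation w_1 … w_{n+1} (so w_i = w(i)), define des(w) = {(w_{i+1}, w_i) : 1 ≤ i ≤ n and w_i > w_{i+1}} and asc(w) = {(w_i, w_{i+1}) : 1 ≤ i ≤ n and w_i < w_{i+1}}. Then a permutation is determined by its ascent and descent sets: if permutations v and w of {1, …, n+1} satisfy asc(v) = asc(w) and des(v) = des(w), then v = w. Equivalently, for disjoint sets A and D of pairs from {1, …, n+1} with |A| + |D| = n, there is at most one permutation w with asc(w) = A and des(w) = D. -/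
/-!
Reading the one-line notation of `w` as a path `w₁ → w₂ → ⋯ → w_{n+1}`, every step is either an
ascent `(wᵢ, wᵢ₊₁)` or, swapped, a descent, so `asc(w)` and `des(w)` together give the set of steps
of the path. Since `w` is injective, the path is recovered from its steps: it starts at the only
value that is not the end of a step, and from each `wᵢ` there is a single step out.
-/

namespace Paper

/-- The ascent set of a permutation `w` of `{1, …, n+1}` (modeled on `Fin (n+1)`):
pairs `(w_i, w_{i+1})` with `w_i < w_{i+1}`. -/
def ascSet (n : ℕ) (w : Equiv.Perm (Fin (n + 1))) : Set (Fin (n + 1) × Fin (n + 1)) :=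
  {p | ∃ i : Fin n, w i.castSucc < w i.succ ∧ p = (w i.castSucc, w i.succ)}

/-- The descent set of a permutation `w` of `{1, …, n+1}` (modeled on `Fin (n+1)`):
pairs `(w_{i+1}, w_i)` with `w_i > w_{i+1}`. -/
def desSet (n : ℕ) (w : Equiv.Perm (Fin (n + 1))) : Set (Fin (n + 1) × Fin (n + 1)) :=
  {p | ∃ i : Fin n, w i.succ < w i.castSucc ∧ p = (w i.succ, w i.castSucc)}

def consecutivePairs {α : Type*} {n : ℕ} (f : Fin (n + 1) → α) : Set (α × α) :=
  Set.range fun i : Fin n => (f i.castSucc, f i.succ)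

section consecutivePairs

variable {α : Type*} {n : ℕ} {f g : Fin (n + 1) → α}

theorem apply_zero_eq_of_consecutivePairs_subset (hg : Function.Injective g)
    (h0 : g 0 ∈ Set.range f) (h : consecutivePairs f ⊆ consecutivePairs g) : f 0 = g 0 := by
  obtain ⟨k, hk⟩ := h0
  cases k using Fin.cases with
  | zero => exact hk
  | succ j =>
    obtain ⟨j', hj'⟩ := h ⟨j, rfl⟩
    have : g j'.succ = g 0 := (congrArg Prod.snd hj').trans hk
    exact absurd (hg this) (Fin.succ_ne_zero j')

theorem eq_of_consecutivePairs_subset_of_apply_zero_eq (hg : Function.Injective g)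
    (h0 : f 0 = g 0) (h : consecutivePairs f ⊆ consecutivePairs g) : f = g := by
  funext k
  induction k using Fin.induction with
  | zero => exact h0
  | succ i ih =>
    obtain ⟨j, hj⟩ := h ⟨i, rfl⟩
    simp only [Prod.mk.injEq] at hj
    obtain rfl : j = i := Fin.castSucc_injective n (hg (hj.1.trans ih))
    exact hj.2.symm

theorem eq_of_consecutivePairs_eq (hg : Function.Injective g) (h0 : g 0 ∈ Set.range f)
    (h : consecutivePairs f = consecutivePairs g) : f = g :=
  eq_of_consecutivePairs_subset_of_apply_zero_eq hg
    (apply_zero_eq_of_consecutivePairs_subset hg h0 h.subset) h.subset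

end consecutivePairs

theorem consecutivePairs_eq_ascSet_union_desSet (n : ℕ) (w : Equiv.Perm (Fin (n + 1))) :
    consecutivePairs w = ascSet n w ∪ Prod.swap ⁻¹' desSet n w := by
  ext ⟨a, b⟩
  simp only [consecutivePairs, ascSet, desSet, Set.mem_range, Set.mem_union, Set.mem_preimage,
    Set.mem_ofPred_eq, Prod.swap_prod_mk, Prod.mk.injEq]
  constructor
  · rintro ⟨i, rfl, rfl⟩
    have hne : w i.castSucc ≠ w i.succ :=
      w.injective.ne Fin.castSucc_lt_succ.ne
    rcases hne.lt_or_gt with hlt | hgt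
    · exact Or.inl ⟨i, hlt, rfl, rfl⟩
    · exact Or.inr ⟨i, hgt, rfl, rfl⟩
  · rintro (⟨i, -, rfl, rfl⟩ | ⟨i, -, rfl, rfl⟩) <;> exact ⟨i, rfl, rfl⟩

theorem perm_eq_of_ascSet_eq_and_desSet_eq_general (n : ℕ)
    (v w : Equiv.Perm (Fin (n + 1)))
    (hasc : ascSet n v = ascSet n w) (hdes : desSet n v = desSet n w) :
    v = w := by
  have hpairs : consecutivePairs v = consecutivePairs w := by
    rw [consecutivePairs_eq_ascSet_union_desSet, consecutivePairs_eq_ascSet_union_desSet, hasc,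
      hdes]
  exact Equiv.coe_fn_injective
    (eq_of_consecutivePairs_eq w.injective (v.surjective (w 0)) hpairs)

/-- a permutation is determined by its ascent and descent sets. -/
theorem perm_eq_of_ascSet_eq_and_desSet_eq (n : ℕ) (hn : 1 ≤ n)
    (v w : Equiv.Perm (Fin (n + 1)))
    (hasc : ascSet n v = ascSet n w) (hdes : desSet n v = desSet n w) :
    v = w :=
  perm_eq_of_ascSet_eq_and_desSet_eq_general n v w hasc hdes

end Paper
end
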